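/- arXiv:0812.3592 — 2 statements merged into one kernel-verified Lean document; each statement's English description precedes it below -/
import Mathlib

section
/- Let $k$ be a field and let $R = k[X,Y,Z]/(X^2 - Y^2 Z)$. The radical of the principal ideal of $R$ generated by the image of $Z$ equals the ideal generated by the images of $X$ and $Z$. -/
/-!
The ideal `(x, z)` of `k[x, y, z]` is prime, being the kernel of the substitution `x, z ↦ 0` into
a domain, and it contains `x² - y²z`; hence its image `(x, z)` in `R` is prime. This prime contains
`z`, so it contains `√(z)`, and conversely `x² = y²z ∈ (z)`.
-/

open MvPolynomial

namespace MvPolynomial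

variable {σ R : Type*} [CommRing R]

theorem span_X_image_eq_ker_bind₁_indicator (s : Set σ) :
    Ideal.span (X '' s : Set (MvPolynomial σ R)) =
      RingHom.ker (bind₁ (sᶜ.indicator (X : σ → MvPolynomial σ R))) := by
  set J := Ideal.span (X '' s : Set (MvPolynomial σ R))
  -- substituting `0` for the variables in `s` does not change a class modulo `J`
  have hmk : (Ideal.Quotient.mkₐ R J).comp (bind₁ (sᶜ.indicator X)) = Ideal.Quotient.mkₐ R J := by
    ext i
    by_cases hi : i ∈ s
    · have : X i ∈ J := Ideal.subset_span (Set.mem_image_of_mem X hi)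
      simpa [hi, eq_comm (a := (0 : _ ⧸ J)), Ideal.Quotient.eq_zero_iff_mem] using this
    · simp [hi]
  apply le_antisymm
  · rw [Ideal.span_le]
    rintro _ ⟨i, hi, rfl⟩
    simp [hi]
  · intro p hp
    rw [← Ideal.Quotient.eq_zero_iff_mem, ← Ideal.Quotient.mkₐ_eq_mk R, ← hmk, AlgHom.comp_apply,
      RingHom.mem_ker.mp hp, map_zero]

theorem isPrime_span_X_image [IsDomain R] (s : Set σ) :
    (Ideal.span (X '' s : Set (MvPolynomial σ R))).IsPrime := by
  rw [span_X_image_eq_ker_bind₁_indicator]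
  exact RingHom.ker_isPrime _

end MvPolynomial

theorem Ideal.radical_span_singleton_eq_span_pair {A : Type*} [CommSemiring A] {x z : A} {n : ℕ}
    (hx : x ^ n ∈ Ideal.span {z}) (hP : (Ideal.span {x, z}).IsPrime) :
    (Ideal.span {z}).radical = Ideal.span {x, z} := by
  apply le_antisymm
  · exact hP.radical_le_iff.2 (Ideal.span_mono (Set.subset_insert x {z}))
  · rw [Ideal.span_le, Set.insert_subset_iff, Set.singleton_subset_iff]
    exact ⟨⟨n, hx⟩, Ideal.le_radical (Ideal.mem_span_singleton_self z)⟩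

/-- Let `R = k[X,Y,Z]/(X^2 - Y^2 Z)`. The radical of the principal ideal of `R`
generated by the image of `Z` equals the ideal generated by the images of `X` and `Z`.
Here `X 0, X 1, X 2` play the roles of `X, Y, Z`. -/
theorem pinchPoint_radical_z (k : Type*) [Field k] :
    Ideal.radical
        (Ideal.span
          ({Ideal.Quotient.mk
              (Ideal.span ({(X 0) ^ 2 - (X 1) ^ 2 * X 2} : Set (MvPolynomial (Fin 3) k)))
              (X 2)} :
            Set (MvPolynomial (Fin 3) k ⧸
              Ideal.span ({(X 0) ^ 2 - (X 1) ^ 2 * X 2} : Set (MvPolynomial (Fin 3) k)))))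
      = Ideal.span
          {Ideal.Quotient.mk
              (Ideal.span ({(X 0) ^ 2 - (X 1) ^ 2 * X 2} : Set (MvPolynomial (Fin 3) k)))
              (X 0),
            Ideal.Quotient.mk
              (Ideal.span ({(X 0) ^ 2 - (X 1) ^ 2 * X 2} : Set (MvPolynomial (Fin 3) k)))
              (X 2)} := by
  set I := Ideal.span ({(X 0) ^ 2 - (X 1) ^ 2 * X 2} : Set (MvPolynomial (Fin 3) k))
  set P := Ideal.span (X '' {0, 2} : Set (MvPolynomial (Fin 3) k))
  have hP : P.IsPrime := isPrime_span_X_image _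
  have hIP : I ≤ P := by
    have hX (i : Fin 3) (hi : i ∈ ({0, 2} : Set (Fin 3))) : X i ∈ P :=
      Ideal.subset_span (Set.mem_image_of_mem X hi)
    rw [Ideal.span_singleton_le_iff_mem]
    exact P.sub_mem (P.pow_mem_of_mem (hX 0 (by simp)) 2 two_pos)
      (P.mul_mem_left _ (hX 2 (by simp)))
  have hx : Ideal.Quotient.mk I (X 0) ^ 2 =
      Ideal.Quotient.mk I (X 1) ^ 2 * Ideal.Quotient.mk I (X 2) := by
    rw [← sub_eq_zero, ← map_pow, ← map_pow, ← map_mul, ← map_sub, Ideal.Quotient.eq_zero_iff_mem]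
    exact Ideal.mem_span_singleton_self _
  refine Ideal.radical_span_singleton_eq_span_pair (n := 2) ?_ ?_
  · rw [hx]
    exact Ideal.mul_mem_left _ _ (Ideal.mem_span_singleton_self _)
  · simpa [P, Ideal.map_span, Set.image_insert_eq] using Ideal.isPrime_map_quotientMk_of_isPrime hIP
end

section
/- For every field $k$, the element $X^2 - Y^2 Z$ is irreducible in the formal power series ring $k[[X,Y,Z]]$. -/
/-!
Write `X, Y, Z` for `X 0, X 1, X 2` and suppose `X² - Y²Z = a * b` with `a`, `b` in the
maximal ideal. The degree-two part gives `ℓ_a * ℓ_b = X²` for the linear parts, and since `X`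
is prime both `ℓ_a` and `ℓ_b` are multiples of `X`. Then `a * b` lies in `(X) + m⁴`, so its
coefficient at `Y²Z` vanishes, whereas that of `X² - Y²Z` is `-1`.
-/

open MvPowerSeries Finsupp

theorem Prime.dvd_of_mul_eq_sq {α : Type*} [CommMonoidWithZero α] [IsCancelMulZero α] {p f g : α}
    (hp : Prime p) (hf : ¬IsUnit f) (h : f * g = p ^ 2) : p ∣ f := by
  rcases hp.dvd_or_dvd ⟨p, h.trans (sq p)⟩ with hpf | ⟨v, rfl⟩
  · exact hpf
  have hfv : f * v = p := mul_left_cancel₀ hp.ne_zero (by rw [mul_left_comm, h, sq])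
  rcases hp.dvd_or_dvd ⟨1, by rw [hfv, mul_one]⟩ with hpf | ⟨w, rfl⟩
  · exact hpf
  exact absurd (IsUnit.of_mul_eq_one w (mul_left_cancel₀ hp.ne_zero
    (by rw [mul_one, mul_left_comm, hfv]))) hf

namespace MvPowerSeries

variable {σ R : Type*}

section Semiring

variable [Semiring R]

theorem homogeneousComponent_monomial (p : ℕ) (d : σ →₀ ℕ) (r : R) :
    homogeneousComponent p (monomial d r) = if d.degree = p then monomial d r else 0 := by
  classical
  ext e
  by_cases he : e = d
  · subst he
    split_ifs <;> simp_all [coeff_homogeneousComponent]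
  · split_ifs <;> simp [coeff_homogeneousComponent, coeff_monomial, he]

theorem X_dvd_iff_weightedHomogeneousComponent_eq_zero [DecidableEq σ] {i : σ}
    {f : MvPowerSeries σ R} :
    X i ∣ f ↔ weightedHomogeneousComponent (Pi.single i 1) 0 f = 0 := by
  simp only [X_dvd_iff, MvPowerSeries.ext_iff, coeff_weightedHomogeneousComponent,
    weight_single_one_apply, map_zero, ite_eq_right_iff]

end Semiring

theorem le_order_sub_homogeneousComponent [Ring R] {f : MvPowerSeries σ R} {n : ℕ}
    (hf : n ≤ f.order) : n + 1 ≤ (f - homogeneousComponent n f).order := by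
  refine le_order fun d hd => ?_
  rw [map_sub, coeff_homogeneousComponent]
  rcases (Nat.lt_succ_iff.mp (by exact_mod_cast hd)).eq_or_lt with hdn | hdn
  · rw [if_pos hdn, sub_self]
  · rw [if_neg hdn.ne, sub_zero, coeff_of_lt_order (lt_of_lt_of_le (by exact_mod_cast hdn) hf)]

theorem prime_X [CommSemiring R] [NoZeroDivisors R] [Nontrivial R] (i : σ) :
    Prime (X i : MvPowerSeries σ R) := by
  classical
  refine ⟨nonZeroDivisors.ne_zero X_mem_nonzeroDivisors, fun h => ?_, fun f g hfg => ?_⟩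
  · simpa using h.map constantCoeff
  · -- the `X i`-weight-zero component is the substitution `X i = 0`, a multiplicative map
    simp only [X_dvd_iff_weightedHomogeneousComponent_eq_zero] at hfg ⊢
    have hmul := weightedHomogeneousComponent_mul_of_le_weightedOrder (w := Pi.single i 1)
      (f := f) (g := g) (p := 0) (q := 0) zero_le zero_le
    rwa [zero_add, hfg, eq_comm, mul_eq_zero] at hmul

theorem coeff_mul_eq_zero_of_X_dvd_homogeneousComponent_one [CommRing R] {i : σ}
    {f g : MvPowerSeries σ R} (hf : constantCoeff f = 0) (hg : constantCoeff g = 0)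
    (hfi : X i ∣ homogeneousComponent 1 f) (hgi : X i ∣ homogeneousComponent 1 g)
    {d : σ →₀ ℕ} (hdi : d i = 0) (hd : d.degree < 4) : coeff d (f * g) = 0 := by
  set f' := f - homogeneousComponent 1 f
  set g' := g - homogeneousComponent 1 g
  have hf' : 2 ≤ f'.order :=
    le_order_sub_homogeneousComponent (one_le_order_iff_constCoeff_eq_zero.mpr hf)
  have hg' : 2 ≤ g'.order :=
    le_order_sub_homogeneousComponent (one_le_order_iff_constCoeff_eq_zero.mpr hg)
  have hfg : f * g = homogeneousComponent 1 f * g + f' * homogeneousComponent 1 g + f' * g' := by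
    ring
  rw [hfg, map_add, map_add, X_dvd_iff.mp (dvd_mul_of_dvd_left hfi g) d hdi,
    X_dvd_iff.mp (dvd_mul_of_dvd_right hgi f') d hdi, coeff_of_lt_order, add_zero, add_zero]
  calc (d.degree : ℕ∞) < 2 + 2 := by exact_mod_cast hd
    _ ≤ f'.order + g'.order := add_le_add hf' hg'
    _ ≤ (f' * g').order := le_order_mul

end MvPowerSeries

/-- For every field `k`, the element `X^2 - Y^2 Z` is irreducible in the formal power
series ring `k[[X,Y,Z]]`. Here `X 0, X 1, X 2` play the roles of `X, Y, Z`. -/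
theorem pinchPoint_powerSeries_irreducible (k : Type*) [Field k] :
    Irreducible
      ((MvPowerSeries.X 0) ^ 2 - (MvPowerSeries.X 1) ^ 2 * MvPowerSeries.X 2 :
        MvPowerSeries (Fin 3) k) := by
  have hmono : (X 0 ^ 2 - X 1 ^ 2 * X 2 : MvPowerSeries (Fin 3) k) =
      monomial (single 0 2) 1 - monomial (single 1 2 + single 2 1) 1 := by
    rw [X_pow_eq, X_pow_eq, ← pow_one (X 2), X_pow_eq, monomial_mul_monomial, one_mul]
  have hnonunit {f : MvPowerSeries (Fin 3) k} : ¬IsUnit f ↔ constantCoeff f = 0 := by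
    rw [isUnit_iff_constantCoeff, isUnit_iff_ne_zero, not_not]
  refine ⟨hnonunit.mpr (by simp), fun a b hab => ?_⟩
  by_contra! ⟨ha, hb⟩
  have ha1 : 1 ≤ a.order := one_le_order_iff_constCoeff_eq_zero.mpr (hnonunit.mp ha)
  have hb1 : 1 ≤ b.order := one_le_order_iff_constCoeff_eq_zero.mpr (hnonunit.mp hb)
  have hlin : homogeneousComponent 1 a * homogeneousComponent 1 b = X 0 ^ 2 := by
    rw [← homogeneousComponent_mul_of_le_order ha1 hb1, ← hab, hmono, map_sub,
      homogeneousComponent_monomial, homogeneousComponent_monomial, X_pow_eq]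
    simp [degree_single]
  have hlin_nonunit (f : MvPowerSeries (Fin 3) k) : ¬IsUnit (homogeneousComponent 1 f) := by
    simp [hnonunit, ← coeff_zero_eq_constantCoeff_apply, coeff_homogeneousComponent]
  have hXa := (prime_X 0).dvd_of_mul_eq_sq (hlin_nonunit a) hlin
  have hXb := (prime_X 0).dvd_of_mul_eq_sq (hlin_nonunit b) (by rw [mul_comm, hlin])
  have hcoeff := coeff_mul_eq_zero_of_X_dvd_homogeneousComponent_one (hnonunit.mp ha)
    (hnonunit.mp hb) hXa hXb (d := single 1 2 + single 2 1) (by simp) (by simp [degree_single])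
  have hne : single 1 2 + single 2 1 ≠ (single 0 2 : Fin 3 →₀ ℕ) := fun h => by
    simpa using DFunLike.congr_fun h 0
  rw [← hab, hmono] at hcoeff
  simp [coeff_monomial, hne] at hcoeff
end
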